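/- arXiv:2408.17173 — 2 statements merged into one kernel-verified Lean document; each statement's English description precedes it below -/
import Mathlib

section
/- For every η ∈ (0,1), the power series defining the Mainardi function, K_η(z) = Σ_{m=0}^∞ (-1)^m z^m / (m! · Γ(-ηm + 1 - η)), converges for every complex number z; that is, the series has infinite radius of convergence, so K_η is an entire function. -/
/-!
Euler's reflection formula gives `|1/Γ(1 - x)| = Γ(x) |sin πx| / π ≤ Γ(x) / π` for `x > 0`, so
the `m`-th term is bounded by `|z|^m Γ(η(m+1)) / (π m!)`. Log-convexity of `Γ` between `x` and
`x + 1` yields Wendel's inequality `Γ(x + η) ≤ x^η Γ(x)`, hence the ratio of consecutive bounds is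
at most `|z| (m+1)^(η-1)`, which tends to `0` because `η < 1`; the ratio test concludes.
-/

open Real Filter Nat Topology

namespace Real

theorem Gamma_add_le_rpow_mul_Gamma {x s : ℝ} (hx : 0 < x) (hs0 : 0 < s) (hs1 : s < 1) :
    Gamma (x + s) ≤ x ^ s * Gamma x := by
  have hΓ := Gamma_pos_of_pos hx
  calc Gamma (x + s) = Gamma ((1 - s) * x + s * (x + 1)) := by ring_nf
    _ ≤ Gamma x ^ (1 - s) * Gamma (x + 1) ^ s :=
      Gamma_mul_add_mul_le_rpow_Gamma_mul_rpow_Gamma hx (by linarith) (by linarith) hs0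
        (by ring)
    _ = x ^ s * Gamma x := by
      rw [Gamma_add_one hx.ne', mul_rpow hx.le hΓ.le, ← mul_assoc, mul_comm _ (x ^ s),
        mul_assoc, ← rpow_add hΓ, sub_add_cancel, rpow_one]

/-- Both sides vanish when `x` is a positive integer. -/
theorem inv_Gamma_one_sub_eq {x : ℝ} (hx : Gamma x ≠ 0) :
    (Gamma (1 - x))⁻¹ = Gamma x * sin (π * x) / π := by
  rw [← div_mul_cancel_left₀ hx, Gamma_mul_Gamma_one_sub, div_div_eq_mul_div]

theorem abs_inv_Gamma_one_sub_le {x : ℝ} (hx : 0 < x) : |(Gamma (1 - x))⁻¹| ≤ Gamma x / π := by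
  have hΓ := Gamma_pos_of_pos hx
  rw [inv_Gamma_one_sub_eq hΓ.ne', abs_div, abs_mul, abs_of_pos hΓ, abs_of_pos pi_pos]
  gcongr
  exact mul_le_of_le_one_right hΓ.le (abs_sin_le_one _)

end Real

theorem summable_pow_mul_Gamma_mul_succ_div_factorial {η : ℝ} (hη0 : 0 < η) (hη1 : η < 1)
    (r : ℝ) : Summable fun m : ℕ => r ^ m * Gamma (η * (m + 1)) / m ! := by
  have hlim : Tendsto (fun m : ℕ => |r| * ((m : ℝ) + 1) ^ (η - 1)) atTop (𝓝 0) := by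
    simpa using ((tendsto_rpow_neg_atTop (by linarith : 0 < 1 - η)).comp
      (tendsto_atTop_add_const_right _ 1 tendsto_natCast_atTop_atTop)).const_mul |r|
  refine summable_of_ratio_norm_eventually_le one_half_lt_one ?_
  filter_upwards [hlim.eventually_le_const one_half_pos] with m hm
  set x := η * ((m : ℝ) + 1)
  have hm1 : (0 : ℝ) < m + 1 := by positivity
  have hx : 0 < x := by positivity
  have hratio : |r| * x ^ η ≤ 1 / 2 * (m + 1) := by
    calc |r| * x ^ η ≤ |r| * ((m : ℝ) + 1) ^ η := by
          gcongr
          exact mul_le_of_le_one_left hm1.le hη1.le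
      _ = |r| * ((m : ℝ) + 1) ^ (η - 1) * (m + 1) := by
          rw [rpow_sub_one hm1.ne', mul_assoc, div_mul_cancel₀ _ hm1.ne']
      _ ≤ 1 / 2 * (m + 1) := by gcongr
  have hΓ := Gamma_pos_of_pos hx
  have hsucc : η * ((m : ℝ) + 1 + 1) = x + η := by ring
  simp only [norm_div, norm_mul, norm_pow, Real.norm_eq_abs, Nat.abs_cast, factorial_succ,
    Nat.cast_mul, Nat.cast_succ]
  rw [hsucc, abs_of_pos hΓ, abs_of_pos (Gamma_pos_of_pos (by positivity)), abs_of_pos hm1]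
  calc |r| ^ (m + 1) * Gamma (x + η) / ((m + 1) * m !)
      ≤ |r| ^ (m + 1) * (x ^ η * Gamma x) / ((m + 1) * m !) := by
        gcongr
        exact Gamma_add_le_rpow_mul_Gamma hx hη0 hη1
    _ = |r| * x ^ η / (m + 1) * (|r| ^ m * Gamma x / m !) := by
        field_simp
        ring
    _ ≤ 1 / 2 * (|r| ^ m * Gamma x / m !) := by
        gcongr ?_ * _
        rwa [div_le_iff₀ hm1]

/-- For every `η ∈ (0,1)`, the power series defining the Mainardi function
`K_η(z) = ∑_{m=0}^∞ (-1)^m z^m / (m! · Γ(-ηm + 1 - η))` converges for every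
complex number `z` (so it has infinite radius of convergence and `K_η` is entire).
Note that Mathlib's `Complex.Gamma` vanishes at the nonpositive integers, so division
by it implements the entire reciprocal Gamma function. -/
theorem mainardi_series_summable (η : ℝ) (hη0 : 0 < η) (hη1 : η < 1) (z : ℂ) :
    Summable (fun m : ℕ =>
      (-1 : ℂ) ^ m * z ^ m /
        ((Nat.factorial m : ℂ) * Complex.Gamma (-(η : ℂ) * (m : ℂ) + 1 - (η : ℂ)))) := by
  refine .of_norm_bounded
    ((summable_pow_mul_Gamma_mul_succ_div_factorial hη0 hη1 ‖z‖).div_const π) fun m => ?_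
  have harg : -(η : ℂ) * m + 1 - η = ((1 - η * (m + 1) : ℝ) : ℂ) := by push_cast; ring
  rw [harg, Complex.Gamma_ofReal]
  simp only [norm_div, norm_mul, norm_pow, norm_neg, norm_one, one_pow, one_mul,
    Complex.norm_real, Complex.norm_natCast, Real.norm_eq_abs]
  calc ‖z‖ ^ m / (m ! * |Gamma (1 - η * (m + 1))|)
      = ‖z‖ ^ m / m ! * |(Gamma (1 - η * (m + 1)))⁻¹| := by rw [abs_inv]; ring
    _ ≤ ‖z‖ ^ m / m ! * (Gamma (η * (m + 1)) / π) := by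
        gcongr
        exact abs_inv_Gamma_one_sub_le (by positivity)
    _ = ‖z‖ ^ m * Gamma (η * (m + 1)) / m ! / π := by ring
end

section
/- Let 0 < θ < 1, q ≥ 1 with (θ-1)q > -1, and 0 ≤ τ₁ ≤ τ₂. Then ∫_0^{τ₁} ((τ₁-r)^{θ-1} - (τ₂-r)^{θ-1})^q dr ≤ (τ₂-τ₁)^{(θ-1)q+1} / ((θ-1)q+1). -/
open intervalIntegral MeasureTheory Set

lemma real_add_rpow_le_rpow_add {a b p : ℝ} (ha : 0 ≤ a) (hb : 0 ≤ b) (hp : 1 ≤ p) :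
    a ^ p + b ^ p ≤ (a + b) ^ p := by
  have h := NNReal.add_rpow_le_rpow_add a.toNNReal b.toNNReal hp
  have h' := (NNReal.coe_le_coe).2 h
  push_cast at h'
  rwa [Real.coe_toNNReal a ha, Real.coe_toNNReal b hb] at h'

/-- Estimate for the difference of singular kernels: for `0 < θ < 1`, `q ≥ 1` with
`(θ-1)q > -1` and `0 ≤ τ₁ ≤ τ₂`,
`∫_0^{τ₁} ((τ₁-r)^{θ-1} - (τ₂-r)^{θ-1})^q dr ≤ (τ₂-τ₁)^{(θ-1)q+1} / ((θ-1)q+1)`. -/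
theorem singular_kernel_difference_estimate
    (θ q τ₁ τ₂ : ℝ) (hθ0 : 0 < θ) (hθ1 : θ < 1) (hq : 1 ≤ q)
    (hexp : -1 < (θ - 1) * q) (hτ0 : 0 ≤ τ₁) (hτ : τ₁ ≤ τ₂) :
    (∫ r in (0 : ℝ)..τ₁, ((τ₁ - r) ^ (θ - 1) - (τ₂ - r) ^ (θ - 1)) ^ q) ≤
      (τ₂ - τ₁) ^ ((θ - 1) * q + 1) / ((θ - 1) * q + 1) := by
  set p := (θ - 1) * q with hpdef
  have hq0 : (0 : ℝ) < q := lt_of_lt_of_le one_pos hq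
  have hp1 : (0 : ℝ) < p + 1 := by linarith
  set f : ℝ → ℝ := fun r => ((τ₁ - r) ^ (θ - 1) - (τ₂ - r) ^ (θ - 1)) ^ q with hfdef
  set g : ℝ → ℝ := fun r => (τ₁ - r) ^ p - (τ₂ - r) ^ p with hgdef
  -- pointwise facts on (0, τ₁)
  have key : ∀ r ∈ Ioo (0:ℝ) τ₁, f r ≤ g r ∧ |f r| ≤ (τ₁ - r) ^ p := by
    intro r hr
    have hs : 0 < τ₁ - r := by linarith [hr.2]
    have ht : τ₁ - r ≤ τ₂ - r := by linarith
    have hb0 : 0 ≤ (τ₂ - r) ^ (θ - 1) := Real.rpow_nonneg (by linarith) _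
    have hba : (τ₂ - r) ^ (θ - 1) ≤ (τ₁ - r) ^ (θ - 1) :=
      Real.rpow_le_rpow_of_nonpos hs ht (by linarith)
    have hsub : 0 ≤ (τ₁ - r) ^ (θ - 1) - (τ₂ - r) ^ (θ - 1) := sub_nonneg.2 hba
    have haq : ((τ₁ - r) ^ (θ - 1)) ^ q = (τ₁ - r) ^ p := by
      rw [hpdef, Real.rpow_mul hs.le]
    have hbq : ((τ₂ - r) ^ (θ - 1)) ^ q = (τ₂ - r) ^ p := by
      rw [hpdef, Real.rpow_mul (by linarith : (0:ℝ) ≤ τ₂ - r)]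
    have hle1 : f r ≤ g r := by
      have h := real_add_rpow_le_rpow_add hsub hb0 hq
      rw [sub_add_cancel] at h
      simp only [hfdef, hgdef, ← haq, ← hbq]
      linarith
    have hle2 : |f r| ≤ (τ₁ - r) ^ p := by
      have hfr0 : 0 ≤ f r := Real.rpow_nonneg hsub _
      rw [abs_of_nonneg hfr0]
      calc f r ≤ ((τ₁ - r) ^ (θ - 1)) ^ q :=
            Real.rpow_le_rpow hsub (by linarith) hq0.le
        _ = (τ₁ - r) ^ p := haq
    exact ⟨hle1, hle2⟩
  -- integrability
  have h1 : IntervalIntegrable (fun r => (τ₁ - r) ^ p) volume 0 τ₁ := by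
    have := (intervalIntegrable_rpow' (a := τ₁ - τ₁) (b := τ₁ - 0) hexp).comp_sub_left τ₁
    simpa using this.symm
  have h2 : IntervalIntegrable (fun r => (τ₂ - r) ^ p) volume 0 τ₁ := by
    have := (intervalIntegrable_rpow' (a := τ₂ - τ₁) (b := τ₂ - 0) hexp).comp_sub_left τ₂
    simpa using this.symm
  have hg : IntervalIntegrable g volume 0 τ₁ := h1.sub h2
  have hrestr : volume.restrict (Ioo (0:ℝ) τ₁) = volume.restrict (Ioc 0 τ₁) :=
    Measure.restrict_congr_set Ioo_ae_eq_Ioc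
  have hfcont : ContinuousOn f (Ioo (0:ℝ) τ₁) := by
    apply ContinuousOn.rpow_const
    · apply ContinuousOn.sub
      · apply ContinuousOn.rpow_const (by fun_prop)
        intro x hx
        left
        have := hx.2
        intro hc
        simp only [sub_eq_zero] at hc
        linarith
      · apply ContinuousOn.rpow_const (by fun_prop)
        intro x hx
        left
        have := hx.2
        intro hc
        simp only [sub_eq_zero] at hc
        linarith
    · intro x _
      right
      linarith
  have hfmeas : AEStronglyMeasurable f (volume.restrict (Ioc 0 τ₁)) := by
    rw [← hrestr]
    exact hfcont.aestronglyMeasurable measurableSet_Ioo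
  have hf : IntervalIntegrable f volume 0 τ₁ := by
    rw [intervalIntegrable_iff_integrableOn_Ioc_of_le hτ0]
    apply Integrable.mono' ((intervalIntegrable_iff_integrableOn_Ioc_of_le hτ0).1 h1) hfmeas
    rw [← hrestr, ae_restrict_iff' measurableSet_Ioo]
    exact Filter.Eventually.of_forall fun r hr => (key r hr).2
  -- monotonicity of the integral
  have hmono : (∫ r in (0:ℝ)..τ₁, f r) ≤ ∫ r in (0:ℝ)..τ₁, g r := by
    apply integral_mono_ae_restrict hτ0 hf hg
    have hIcc : volume.restrict (Ioo (0:ℝ) τ₁) = volume.restrict (Icc 0 τ₁) :=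
      Measure.restrict_congr_set Ioo_ae_eq_Icc
    rw [Filter.EventuallyLE, ← hIcc, ae_restrict_iff' measurableSet_Ioo]
    exact Filter.Eventually.of_forall fun r hr => (key r hr).1
  -- compute the integral of g
  have e1 : (∫ r in (0:ℝ)..τ₁, (τ₁ - r) ^ p) = τ₁ ^ (p + 1) / (p + 1) := by
    rw [intervalIntegral.integral_comp_sub_left (fun x => x ^ p) τ₁]
    simp only [sub_self, sub_zero]
    rw [integral_rpow (Or.inl hexp), Real.zero_rpow (by positivity)]
    ring
  have e2 : (∫ r in (0:ℝ)..τ₁, (τ₂ - r) ^ p)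
      = (τ₂ ^ (p + 1) - (τ₂ - τ₁) ^ (p + 1)) / (p + 1) := by
    rw [intervalIntegral.integral_comp_sub_left (fun x => x ^ p) τ₂]
    simp only [sub_zero]
    rw [integral_rpow (Or.inl hexp)]
  have hg_int : (∫ r in (0:ℝ)..τ₁, g r)
      = (τ₁ ^ (p + 1) - τ₂ ^ (p + 1) + (τ₂ - τ₁) ^ (p + 1)) / (p + 1) := by
    rw [hgdef]
    rw [intervalIntegral.integral_sub h1 h2, e1, e2]
    ring
  have hnum : τ₁ ^ (p + 1) ≤ τ₂ ^ (p + 1) :=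
    Real.rpow_le_rpow hτ0 hτ hp1.le
  calc (∫ r in (0:ℝ)..τ₁, f r) ≤ ∫ r in (0:ℝ)..τ₁, g r := hmono
    _ = (τ₁ ^ (p + 1) - τ₂ ^ (p + 1) + (τ₂ - τ₁) ^ (p + 1)) / (p + 1) := hg_int
    _ ≤ (τ₂ - τ₁) ^ (p + 1) / (p + 1) := by
        gcongr
        linarith
    _ = (τ₂ - τ₁) ^ ((θ - 1) * q + 1) / ((θ - 1) * q + 1) := rfl
end
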